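/- In the setting of the mean-square estimate for I₁, the sum over pairs of distant singular points satisfies L₂ := ∑_{σ₁=α₁+iβ₁, σ₂=α₂+iβ₂ ∈ Λ', T/2 < β₁,β₂ < 3T, |β₁−β₂| ≥ U} ∫_T^{2T} O(X^{2(ρ+u)}|c+i(β₁−t)|^{−n}|c−i(β₂−t)|^{−n}) dt = O(T^{2d+ε} U^{−n} X^{2(ρ+u)}), for every integer n ≥ 1. -/

import Mathlib

/-!
Every singular point of `ζ_P` has real part at most `1`, since `ζ_P` is holomorphic and
non-vanishing on `Re s ≥ 1` away from its pole at `s = 1`. Hence both points of a far pair lie in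
the disc `|σ| < 4T`, and the counting estimate gives `≪ T^(2d+ε)` pairs. For a single pair,
`|β₁ - β₂| ≥ U` forces one of the two factors to be at least `U/2` at every `t`, so the integrand
is `≪ U^(-n) (|c + i(β₁ - t)|⁻¹ + |c - i(β₂ - t)|⁻¹)`; the integral of each of these over
`[T, 2T]` is a difference of `arsinh`s, hence `≪ log T ≪ T^ε`.
-/

open Complex Set Filter

/-- The setting of Hashimoto's paper: an infinite countable set `P` of "primes" with a
norm map `Nv : P → ℝ` whose values exceed `1`, such that `∑ Nv p ^ (-a)` has abscissa of
convergence `a_P = 1`; the associated zeta function `Z`, defined by the Euler product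
`∏_p (1 - Nv p ^ (-s))⁻¹` on `Re s > 1`, is assumed (i) to extend holomorphically and
non-vanishingly to `{Re s ≥ 1}` except for a simple pole at `s = 1`, and (ii) to continue
to all of `ℂ` as a meromorphic function of finite order `d ≥ 0`; its singular points
(zeros and poles), counted with multiplicity, are enumerated by `Λ : ℕ → ℂ`, and satisfy
the counting estimates `T^(d-ε) ≪ #{σ ∈ Λ_P : |σ| < T} ≪ T^(d+ε)`. -/
structure ZetaSystem where
  /-- the set of "primes" -/
  P : Type
  countable_P : Countable P
  infinite_P : Infinite P
  /-- the norm map -/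
  Nv : P → ℝ
  one_lt_Nv : ∀ p : P, 1 < Nv p
  /-- `∑ Nv p ^ (-a) < ∞` for `a > 1` -/
  summable_rpow : ∀ a : ℝ, 1 < a → Summable fun p : P => Nv p ^ (-a)
  /-- the abscissa of convergence is normalized: `a_P = 1`. -/
  not_summable_rpow : ∀ a : ℝ, 0 < a → a < 1 → ¬ Summable fun p : P => Nv p ^ (-a)
  Nv_lt_finite : ∀ x : ℝ, {p : P | Nv p < x}.Finite
  /-- the (meromorphically continued) zeta function of `P` -/
  Z : ℂ → ℂ
  /-- the Euler product formula for `Re s > 1` -/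
  euler : ∀ s : ℂ, 1 < s.re → Z s = ∏' p : P, (1 - (Nv p : ℂ) ^ (-s))⁻¹
  /-- (i): `Z` is non-zero holomorphic on `{Re s ≥ 1} \ {1}` … -/
  analytic_nonzero : ∀ s : ℂ, 1 ≤ s.re → s ≠ 1 → AnalyticAt ℂ Z s ∧ Z s ≠ 0
  /-- … with a simple pole at `s = 1` -/
  simple_pole : ∃ g : ℂ → ℂ, AnalyticAt ℂ g 1 ∧ g 1 ≠ 0 ∧
    ∀ s : ℂ, 1 ≤ s.re → s ≠ 1 → Z s = g s / (s - 1)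
  /-- (ii): `Z` is meromorphic on all of `ℂ` … -/
  meromorphic : ∀ s : ℂ, MeromorphicAt Z s
  /-- the order of `Z` as a meromorphic function -/
  d : ℝ
  d_nonneg : 0 ≤ d
  /-- an enumeration of the singular points (zeros and poles) of `Z`, with multiplicity -/
  Λ : ℕ → ℂ
  Λ_spec : ∀ s : ℂ, s ∈ Set.range Λ ↔ ¬ (AnalyticAt ℂ Z s ∧ Z s ≠ 0)
  Λ_finite : ∀ T : ℝ, {n : ℕ | ‖Λ n‖ < T}.Finite
  /-- `#{σ ∈ Λ_P : |σ| < T} ≪ T^(d+ε)` -/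
  count_upper : ∀ ε : ℝ, 0 < ε → ∃ C : ℝ, 0 < C ∧ ∀ T : ℝ, 2 ≤ T →
    (Nat.card {n : ℕ | ‖Λ n‖ < T} : ℝ) ≤ C * T ^ (d + ε)
  /-- `T^(d-ε) ≪ #{σ ∈ Λ_P : |σ| < T}` -/
  count_lower : ∀ ε : ℝ, 0 < ε → ∃ c : ℝ, 0 < c ∧ ∀ T : ℝ, 2 ≤ T →
    c * T ^ (d - ε) ≤ (Nat.card {n : ℕ | ‖Λ n‖ < T} : ℝ)

namespace ZetaSystem

/-- `d₁ ∈ [0, d]` satisfies `#{σ ∈ Λ_P : T-1 < |σ| < T+1} ≪ T^(d₁+ε)` for every `ε > 0`. -/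
def annulusBound (S : ZetaSystem) (d₁ : ℝ) : Prop :=
  0 ≤ d₁ ∧ d₁ ≤ S.d ∧ ∀ ε : ℝ, 0 < ε → ∃ C : ℝ, 0 < C ∧ ∀ T : ℝ, 2 ≤ T →
    (Nat.card {n : ℕ | T - 1 < ‖S.Λ n‖ ∧ ‖S.Λ n‖ < T + 1} : ℝ)
      ≤ C * T ^ (d₁ + ε)

/-- `ζ_P` has at most finitely many singular points (with multiplicity) in `{Re s ≥ ρ}`. -/
def finitelyManySingIn (S : ZetaSystem) (ρ : ℝ) : Prop :=
  {n : ℕ | ρ ≤ (S.Λ n).re}.Finite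

/-- `∑_{N ∈ Norm(P), N < x} m(N)²`, expressed as the number of pairs `(p₁, p₂)`
with `N(p₁) = N(p₂) < x`. -/
noncomputable def msq (S : ZetaSystem) (x : ℝ) : ℕ :=
  Nat.card {q : S.P × S.P // S.Nv q.1 = S.Nv q.2 ∧ S.Nv q.1 < x}

/-- `x^(α-ε) ≪ ∑_{N ∈ Norm(P), N < x} m(N)² ≪ x^(α+ε)` for every `ε > 0`. -/
def multExp (S : ZetaSystem) (α : ℝ) : Prop :=
  (∀ ε : ℝ, 0 < ε → ∃ c : ℝ, 0 < c ∧ ∀ x : ℝ, 2 ≤ x → c * x ^ (α - ε) ≤ (S.msq x : ℝ)) ∧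
  (∀ ε : ℝ, 0 < ε → ∃ C : ℝ, 0 < C ∧ ∀ x : ℝ, 2 ≤ x → (S.msq x : ℝ) ≤ C * x ^ (α + ε))

end ZetaSystem

/-- Pairs of singular points of `ζ_P` (indexed with multiplicity) lying in
`Λ' = {σ = α + iβ : |β| > T'', α > -T}` with `T/2 < β₁, β₂ < 3T` and `|β₁ - β₂| ≥ U`. -/
def ZetaSystem.farPairs (S : ZetaSystem) (T'' T U : ℝ) : Set (ℕ × ℕ) :=
  {q : ℕ × ℕ | (T'' < |(S.Λ q.1).im| ∧ -T < (S.Λ q.1).re) ∧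
    (T'' < |(S.Λ q.2).im| ∧ -T < (S.Λ q.2).re) ∧
    (T / 2 < (S.Λ q.1).im ∧ (S.Λ q.1).im < 3 * T) ∧
    (T / 2 < (S.Λ q.2).im ∧ (S.Λ q.2).im < 3 * T) ∧
    U ≤ |(S.Λ q.1).im - (S.Λ q.2).im|}

open Real intervalIntegral

theorem Real.arsinh_le_log_one_add_two_mul {x : ℝ} (hx : 0 ≤ x) :
    arsinh x ≤ log (1 + 2 * x) := by
  have hsqrt : √(1 + x ^ 2) ≤ 1 + x := Real.sqrt_le_iff.2 ⟨by positivity, by nlinarith⟩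
  exact Real.log_le_log (by positivity) (by linarith)

theorem Real.arsinh_mul_le_rpow {a T δ : ℝ} (ha : 0 ≤ a) (hT : 1 ≤ T) (hδ : 0 < δ) :
    arsinh (a * T) ≤ (1 + 2 * a) ^ δ / δ * T ^ δ :=
  calc arsinh (a * T) ≤ log (1 + 2 * (a * T)) := arsinh_le_log_one_add_two_mul (by positivity)
    _ ≤ (1 + 2 * (a * T)) ^ δ / δ := log_le_rpow_div (by positivity) hδ
    _ ≤ ((1 + 2 * a) * T) ^ δ / δ := by gcongr; nlinarith
    _ = (1 + 2 * a) ^ δ / δ * T ^ δ := by rw [mul_rpow (by positivity) (by positivity)]; ring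

theorem integral_inv_sqrt_sq_add_sq {c : ℝ} (hc : 0 < c) (β a b : ℝ) :
    ∫ t in a..b, (√(c ^ 2 + (β - t) ^ 2))⁻¹ = arsinh ((b - β) / c) - arsinh ((a - β) / c) := by
  have hderiv (t : ℝ) :
      HasDerivAt (fun t => arsinh ((t - β) / c)) (√(c ^ 2 + (β - t) ^ 2))⁻¹ t := by
    have hsqrt : √(c ^ 2 + (β - t) ^ 2) = c * √(1 + ((t - β) / c) ^ 2) := by
      rw [← Real.sqrt_sq hc.le, ← Real.sqrt_mul (sq_nonneg c), Real.sqrt_sq hc.le]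
      congr 1
      field_simp
      ring
    refine (((hasDerivAt_id t).sub_const β).div_const c).arsinh.congr_deriv ?_
    rw [hsqrt, mul_inv]
    simp [div_eq_mul_inv, mul_comm]
  have hcont : Continuous fun t => (√(c ^ 2 + (β - t) ^ 2))⁻¹ :=
    (by fun_prop : Continuous fun t => √(c ^ 2 + (β - t) ^ 2)).inv₀
      fun t => (Real.sqrt_pos.2 (by positivity)).ne'
  exact integral_eq_sub_of_hasDerivAt (fun t _ => hderiv t) (hcont.intervalIntegrable a b)

theorem integral_inv_sqrt_sq_add_sq_le {c β T : ℝ} (hc : 0 < c) (hβ : β ∈ Icc 0 (3 * T)) :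
    ∫ t in T..(2 * T), (√(c ^ 2 + (β - t) ^ 2))⁻¹ ≤ 2 * arsinh (3 * T / c) := by
  rw [integral_inv_sqrt_sq_add_sq hc, sub_eq_add_neg, ← arsinh_neg, ← neg_div]
  have h₁ : arsinh ((2 * T - β) / c) ≤ arsinh (3 * T / c) := by gcongr; linarith [hβ.1, hβ.2]
  have h₂ : arsinh (-(T - β) / c) ≤ arsinh (3 * T / c) := by gcongr; linarith [hβ.1, hβ.2]
  linarith

theorem inv_pow_succ_mul_inv_pow_succ_le {a b c w : ℝ} (n : ℕ) (hc : 0 < c) (hw : 0 < w)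
    (ha : c ≤ a) (hb : c ≤ b) (hab : w ≤ a ∨ w ≤ b) :
    (a ^ (n + 1))⁻¹ * (b ^ (n + 1))⁻¹ ≤ (c ^ n)⁻¹ * (w ^ (n + 1))⁻¹ * (a⁻¹ + b⁻¹) := by
  wlog hwa : w ≤ a generalizing a b
  · rw [mul_comm, add_comm a⁻¹]
    exact this hb ha hab.symm (hab.resolve_left hwa)
  have ha0 : 0 < a := hc.trans_le ha
  have hb0 : 0 < b := hc.trans_le hb
  calc (a ^ (n + 1))⁻¹ * (b ^ (n + 1))⁻¹ = (a ^ (n + 1))⁻¹ * (b ^ n)⁻¹ * b⁻¹ := by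
        rw [pow_succ b, mul_inv, mul_assoc]
    _ ≤ (w ^ (n + 1))⁻¹ * (c ^ n)⁻¹ * b⁻¹ := by gcongr
    _ ≤ (c ^ n)⁻¹ * (w ^ (n + 1))⁻¹ * (a⁻¹ + b⁻¹) := by
        rw [mul_comm (w ^ (n + 1))⁻¹]
        gcongr
        linarith [inv_pos.2 ha0]

theorem inv_pow_sqrt_mul_inv_pow_sqrt_le {c U y₁ y₂ : ℝ} (n : ℕ) (hc : 0 < c) (hU : 0 < U)
    (hsep : U ≤ |y₁ - y₂|) :
    (√(c ^ 2 + y₁ ^ 2) ^ (n + 1))⁻¹ * (√(c ^ 2 + y₂ ^ 2) ^ (n + 1))⁻¹ ≤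
      (c ^ n)⁻¹ * ((U / 2) ^ (n + 1))⁻¹ * ((√(c ^ 2 + y₁ ^ 2))⁻¹ + (√(c ^ 2 + y₂ ^ 2))⁻¹) := by
  have hfar : U / 2 ≤ |y₁| ∨ U / 2 ≤ |y₂| := by
    by_contra! h
    linarith [abs_sub y₁ y₂]
  refine inv_pow_succ_mul_inv_pow_succ_le n hc (by positivity) ?_ ?_ ?_
  · exact Real.le_sqrt_of_sq_le (by nlinarith)
  · exact Real.le_sqrt_of_sq_le (by nlinarith)
  · exact hfar.imp (fun h => h.trans (Real.abs_le_sqrt (by nlinarith)))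
      (fun h => h.trans (Real.abs_le_sqrt (by nlinarith)))

theorem Complex.norm_ofReal_sub_mul_I (x y : ℝ) : ‖(x : ℂ) - y * I‖ = √(x ^ 2 + y ^ 2) := by
  rw [sub_eq_add_neg, ← neg_mul, ← ofReal_neg, Complex.norm_add_mul_I, neg_sq]

theorem integral_far_pair_le {c U T β₁ β₂ : ℝ} {n : ℕ} (hn : 1 ≤ n) (hc : 0 < c) (hU : 0 < U)
    (hβ₁ : β₁ ∈ Icc 0 (3 * T)) (hβ₂ : β₂ ∈ Icc 0 (3 * T)) (hsep : U ≤ |β₁ - β₂|) :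
    ∫ t in T..(2 * T), ‖(c : ℂ) + ((β₁ - t : ℝ) : ℂ) * Complex.I‖ ^ (-(n : ℝ)) *
        ‖(c : ℂ) - ((β₂ - t : ℝ) : ℂ) * Complex.I‖ ^ (-(n : ℝ))
      ≤ (c ^ (n - 1))⁻¹ * ((U / 2) ^ n)⁻¹ * (4 * arsinh (3 * T / c)) := by
  obtain ⟨n, rfl⟩ := Nat.exists_eq_add_of_le' hn
  have hrpow (y : ℝ) : √y ^ (-((n + 1 : ℕ) : ℝ)) = (√y ^ (n + 1))⁻¹ := by
    rw [Real.rpow_neg (Real.sqrt_nonneg y), Real.rpow_natCast]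
  simp only [Complex.norm_add_mul_I, Complex.norm_ofReal_sub_mul_I, hrpow, Nat.add_sub_cancel]
  have hT : T ≤ 2 * T := by linarith [hβ₁.1, hβ₁.2]
  have hcont (β : ℝ) : Continuous fun t => √(c ^ 2 + (β - t) ^ 2) := by fun_prop
  have hpos (β t : ℝ) : 0 < √(c ^ 2 + (β - t) ^ 2) := Real.sqrt_pos.2 (by positivity)
  have hinv (β : ℝ) : Continuous fun t => (√(c ^ 2 + (β - t) ^ 2))⁻¹ :=
    (hcont β).inv₀ fun t => (hpos β t).ne'
  have hinvpow (β : ℝ) : Continuous fun t => (√(c ^ 2 + (β - t) ^ 2) ^ (n + 1))⁻¹ :=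
    ((hcont β).pow _).inv₀ fun t => (pow_pos (hpos β t) _).ne'
  calc _ ≤ ∫ t in T..(2 * T), (c ^ n)⁻¹ * ((U / 2) ^ (n + 1))⁻¹ *
          ((√(c ^ 2 + (β₁ - t) ^ 2))⁻¹ + (√(c ^ 2 + (β₂ - t) ^ 2))⁻¹) :=
        integral_mono_on hT (((hinvpow β₁).mul (hinvpow β₂)).intervalIntegrable _ _)
          ((continuous_const.mul ((hinv β₁).add (hinv β₂))).intervalIntegrable _ _)
          fun t _ => inv_pow_sqrt_mul_inv_pow_sqrt_le n hc hU
            (by rwa [sub_sub_sub_cancel_right])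
    _ = (c ^ n)⁻¹ * ((U / 2) ^ (n + 1))⁻¹ * ((∫ t in T..(2 * T), (√(c ^ 2 + (β₁ - t) ^ 2))⁻¹)
          + ∫ t in T..(2 * T), (√(c ^ 2 + (β₂ - t) ^ 2))⁻¹) := by
        rw [integral_const_mul, integral_add ((hinv β₁).intervalIntegrable _ _)
          ((hinv β₂).intervalIntegrable _ _)]
    _ ≤ (c ^ n)⁻¹ * ((U / 2) ^ (n + 1))⁻¹ * (4 * arsinh (3 * T / c)) := by
        gcongr
        linarith [integral_inv_sqrt_sq_add_sq_le hc hβ₁, integral_inv_sqrt_sq_add_sq_le hc hβ₂]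

theorem tsum_le_natCard_mul {α : Type*} [Finite α] {f : α → ℝ} {B : ℝ} (h : ∀ a, f a ≤ B) :
    ∑' a, f a ≤ Nat.card α * B := by
  have := Fintype.ofFinite α
  rw [tsum_fintype, Nat.card_eq_fintype_card, ← nsmul_eq_mul]
  exact Finset.sum_le_card_nsmul _ _ _ fun a _ => h a

namespace ZetaSystem

variable (S : ZetaSystem)

theorem re_Λ_le_one (m : ℕ) : (S.Λ m).re ≤ 1 := by
  by_contra! h
  have hne : S.Λ m ≠ 1 := fun h1 => by simp [h1] at h
  exact (S.Λ_spec (S.Λ m)).1 ⟨m, rfl⟩ (S.analytic_nonzero _ h.le hne)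

theorem norm_Λ_lt_four_mul {m : ℕ} {T : ℝ} (hT : 1 < T) (hre : -T < (S.Λ m).re)
    (him : |(S.Λ m).im| < 3 * T) : ‖S.Λ m‖ < 4 * T := by
  have hre' : |(S.Λ m).re| < T := abs_lt.2 ⟨hre, (S.re_Λ_le_one m).trans_lt hT⟩
  linarith [Complex.norm_le_abs_re_add_abs_im (S.Λ m)]

theorem farPairs_subset {T'' T U : ℝ} (hT : 1 < T) :
    S.farPairs T'' T U ⊆ {m | ‖S.Λ m‖ < 4 * T} ×ˢ {m | ‖S.Λ m‖ < 4 * T} := by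
  rintro ⟨m₁, m₂⟩ ⟨⟨-, h₁⟩, ⟨-, h₂⟩, ⟨l₁, u₁⟩, ⟨l₂, u₂⟩, -⟩
  exact ⟨S.norm_Λ_lt_four_mul hT h₁ (abs_lt.2 ⟨by linarith, u₁⟩),
    S.norm_Λ_lt_four_mul hT h₂ (abs_lt.2 ⟨by linarith, u₂⟩)⟩

theorem finite_farPairs {T'' T U : ℝ} (hT : 1 < T) : (S.farPairs T'' T U).Finite :=
  ((S.Λ_finite _).prod (S.Λ_finite _)).subset (S.farPairs_subset hT)

theorem natCard_farPairs_le {ε : ℝ} (hε : 0 < ε) :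
    ∃ C : ℝ, 0 < C ∧ ∀ T'' T U : ℝ, 2 ≤ T →
      (Nat.card (S.farPairs T'' T U) : ℝ) ≤ C * T ^ (2 * S.d + ε) := by
  obtain ⟨C, hC, hcount⟩ := S.count_upper (ε / 2) (by positivity)
  refine ⟨C ^ 2 * 4 ^ (2 * S.d + ε), by positivity, fun T'' T U hT => ?_⟩
  set B : Set ℕ := {m | ‖S.Λ m‖ < 4 * T}
  have hB : (Nat.card B : ℝ) ≤ C * (4 * T) ^ (S.d + ε / 2) := hcount _ (by linarith)
  have hpairs : Nat.card (S.farPairs T'' T U) ≤ Nat.card B * Nat.card B := by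
    rw [← Nat.card_prod, ← Nat.card_congr (Equiv.Set.prod B B)]
    exact Nat.card_mono ((S.Λ_finite _).prod (S.Λ_finite _)) (S.farPairs_subset (by linarith))
  calc (Nat.card (S.farPairs T'' T U) : ℝ) ≤ Nat.card B * Nat.card B := by exact_mod_cast hpairs
    _ ≤ (C * (4 * T) ^ (S.d + ε / 2)) ^ 2 := by rw [sq]; gcongr
    _ = C ^ 2 * 4 ^ (2 * S.d + ε) * T ^ (2 * S.d + ε) := by
        rw [mul_pow, ← Real.rpow_mul_natCast (by positivity), Real.mul_rpow (by norm_num)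
          (by positivity)]
        ring_nf

end ZetaSystem

theorem far_pairs_bound_general (S : ZetaSystem) (ρ : ℝ) (T'' : ℝ)
    (u : ℝ) (c : ℝ) (hc : 0 < c) (n : ℕ) (hn : 1 ≤ n)
    (U : ℝ → ℝ) (hUpos : ∀ T : ℝ, 0 < U T) :
    ∀ ε : ℝ, 0 < ε → ∃ C : ℝ, 0 < C ∧ ∀ᶠ T : ℝ in atTop, ∀ X : ℝ, 2 ≤ X →
      (∑' q : S.farPairs T'' T (U T),
        ∫ t in T..(2 * T), X ^ (2 * (ρ + u)) *
          ‖(c : ℂ) + (((S.Λ (q : ℕ × ℕ).1).im - t : ℝ) : ℂ) * Complex.I‖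
            ^ (-(n : ℝ)) *
          ‖(c : ℂ) - (((S.Λ (q : ℕ × ℕ).2).im - t : ℝ) : ℂ) * Complex.I‖
            ^ (-(n : ℝ)))
        ≤ C * T ^ (2 * S.d + ε) * U T ^ (-(n : ℝ)) * X ^ (2 * (ρ + u)) := by
  intro ε hε
  obtain ⟨C, hC, hcard⟩ := S.natCard_farPairs_le (half_pos hε)
  set A := (1 + 2 * (3 / c)) ^ (ε / 2) / (ε / 2)
  refine ⟨C * ((c ^ (n - 1))⁻¹ * 2 ^ n * (4 * A)), by positivity, ?_⟩
  filter_upwards [eventually_ge_atTop 2] with T hT X hX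
  have hUT := hUpos T
  have : Finite (S.farPairs T'' T (U T)) := (S.finite_farPairs (by linarith)).to_subtype
  calc _ ≤ Nat.card (S.farPairs T'' T (U T)) * (X ^ (2 * (ρ + u)) *
          ((c ^ (n - 1))⁻¹ * ((U T / 2) ^ n)⁻¹ * (4 * (A * T ^ (ε / 2))))) := by
        refine tsum_le_natCard_mul fun q => ?_
        obtain ⟨-, -, ⟨l₁, u₁⟩, ⟨l₂, u₂⟩, hsep⟩ := q.2
        simp only [mul_assoc (X ^ (2 * (ρ + u))), integral_const_mul]
        gcongr
        refine (integral_far_pair_le hn hc hUT ⟨by linarith, u₁.le⟩ ⟨by linarith, u₂.le⟩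
          hsep).trans ?_
        gcongr
        rw [mul_div_right_comm]
        exact arsinh_mul_le_rpow (by positivity) (by linarith) (half_pos hε)
    _ ≤ C * T ^ (2 * S.d + ε / 2) * (X ^ (2 * (ρ + u)) *
          ((c ^ (n - 1))⁻¹ * ((U T / 2) ^ n)⁻¹ * (4 * (A * T ^ (ε / 2))))) := by
        gcongr
        exact hcard T'' T (U T) hT
    _ = _ := by
        rw [show T ^ (2 * S.d + ε) = T ^ (2 * S.d + ε / 2) * T ^ (ε / 2) by
            rw [← Real.rpow_add (by positivity)]; ring_nf,
          Real.rpow_neg hUT.le, Real.rpow_natCast, div_pow, inv_div, div_eq_mul_inv]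
        ring

/-- The sum `L₂` over pairs of distant singular points satisfies
`L₂ = O(T^(2d+ε) U^(-n) X^(2(ρ+u)))` for every integer `n ≥ 1`. -/
theorem far_pairs_bound (S : ZetaSystem) (d₁ : ℝ) (hd₁ : S.annulusBound d₁)
    (ρ : ℝ) (hρ1 : ρ ≤ 1) (hρfin : S.finitelyManySingIn ρ)
    (T'' : ℝ) (hT'' : ∀ m : ℕ, ρ ≤ (S.Λ m).re → |(S.Λ m).im| < T'')
    (u : ℝ) (hu : 1 < u) (c : ℝ) (hc : 0 < c) (n : ℕ) (hn : 1 ≤ n)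
    (U : ℝ → ℝ) (hUpos : ∀ T : ℝ, 0 < U T) (hUo : U =o[atTop] fun T : ℝ => T) :
    ∀ ε : ℝ, 0 < ε → ∃ C : ℝ, 0 < C ∧ ∀ᶠ T : ℝ in atTop, ∀ X : ℝ, 2 ≤ X →
      (∑' q : S.farPairs T'' T (U T),
        ∫ t in T..(2 * T), X ^ (2 * (ρ + u)) *
          ‖(c : ℂ) + (((S.Λ (q : ℕ × ℕ).1).im - t : ℝ) : ℂ) * Complex.I‖
            ^ (-(n : ℝ)) *
          ‖(c : ℂ) - (((S.Λ (q : ℕ × ℕ).2).im - t : ℝ) : ℂ) * Complex.I‖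
            ^ (-(n : ℝ)))
        ≤ C * T ^ (2 * S.d + ε) * U T ^ (-(n : ℝ)) * X ^ (2 * (ρ + u)) :=
  far_pairs_bound_general S ρ T'' u c hc n hn U hUpos
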